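/- arXiv:0908.1379 — 5 statements merged into one kernel-verified Lean document; each statement's English description precedes it below -/
import Mathlib

section
/- Let m, n ≥ 1 be integers, A ∈ ℝ^{m×n}, and b ∈ ℝ^m with b_j > 0 for every j. Let ρ ≥ 1, 0 < η < 1/2, and let T ≥ 1 be an integer with T ≥ ρ·η^{−2}·ln m. Suppose x¹, …, x^T ∈ ℝ^n and y¹, …, y^T ∈ ℝ^m satisfy: y¹_j = 1 for all j; for every t ≤ T, 0 ≤ (A x^t)_j ≤ ρ·b_j for all j and Σ_j y^t_j·(A x^t)_j / b_j ≤ Σ_j y^t_j (the width-ρ oracle condition, the normalized form of y^t·Ax^t ≤ y^t·b); and y^{t+1}_j = (1 + η·(A x^t)_j/(ρ·b_j))·y^t_j for all j and all 1 ≤ t < T. Then the average x̄ = (x¹ + ⋯ + x^T)/T satisfies (A x̄)_j ≤ (1 + 4η)·b_j for every j. -/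
open Matrix Finset

/-!
Potential-function argument. With the normalised violations `g t j = (A x t) j / (ρ b j) ∈ [0, 1]`,
the oracle condition makes the total weight `Φ t = ∑ j, y t j` grow by a factor at most
`1 + η / ρ ≤ exp (η / ρ)` per round, so `Φ T ≤ m exp (η T / ρ)`. Conversely
`1 + η g ≥ exp (η (1 - η) g)` on `[0, 1]`, so a single weight already has
`y T j ≥ exp (η (1 - η) ∑ t, g t j)`. Taking logarithms, `η (1 - η) ∑ t, g t j ≤ log m + η T / ρ`,
and the choice of `T` turns this into `ρ ∑ t, g t j ≤ (1 + 4η) T`, i.e. `(A x̄) j ≤ (1 + 4η) b j`.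
-/

lemma Real.exp_mul_one_sub_mul_le_one_add_mul {η g : ℝ} (hη : 0 ≤ η) (hg₀ : 0 ≤ g)
    (hg₁ : g ≤ 1) : Real.exp (η * (1 - η) * g) ≤ 1 + η * g := by
  have hpos : 0 < 1 + η * g := by positivity
  rw [← Real.le_log_iff_exp_le hpos]
  -- `log (1 + z) ≥ z / (1 + z) ≥ z - z²` for `z = η g`, and `z² ≤ η² g` since `g ≤ 1`
  calc η * (1 - η) * g ≤ η * g - (η * g) ^ 2 := by
        nlinarith [mul_nonneg (sq_nonneg η) (mul_nonneg hg₀ (sub_nonneg.2 hg₁))]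
    _ ≤ (η * g) / (1 + η * g) := by
        rw [le_div_iff₀ hpos]
        nlinarith [pow_nonneg (mul_nonneg hη hg₀) 3]
    _ = 1 - (1 + η * g)⁻¹ := by field_simp; ring
    _ ≤ Real.log (1 + η * g) := Real.one_sub_inv_le_log_of_pos hpos

lemma exp_mul_sum_le_of_mul_update {η : ℝ} (hη : 0 ≤ η) {w g : ℕ → ℝ} (hw₀ : w 0 = 1) :
    ∀ {T : ℕ}, (∀ t < T, 0 ≤ g t ∧ g t ≤ 1) → (∀ t < T, w (t + 1) = (1 + η * g t) * w t) →
      Real.exp (η * (1 - η) * ∑ t ∈ range T, g t) ≤ w T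
  | 0, _, _ => by simp [hw₀]
  | T + 1, hg, hw => by
    have ih := exp_mul_sum_le_of_mul_update hη hw₀ (fun t ht => hg t (ht.trans T.lt_succ_self))
      (fun t ht => hw t (ht.trans T.lt_succ_self))
    obtain ⟨hg₀, hg₁⟩ := hg T T.lt_succ_self
    rw [sum_range_succ, mul_add, Real.exp_add, hw T T.lt_succ_self, mul_comm]
    exact mul_le_mul (Real.exp_mul_one_sub_mul_le_one_add_mul hη hg₀ hg₁) ih
      (Real.exp_pos _).le (by positivity)

section Potential

variable {ι : Type*} [Fintype ι] {η ρ : ℝ}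

lemma sum_mul_update_le (hη : 0 ≤ η) (hρ : 0 < ρ) {y y' g : ι → ℝ}
    (horacle : ρ * ∑ j, y j * g j ≤ ∑ j, y j) (hy' : ∀ j, y' j = (1 + η * g j) * y j) :
    ∑ j, y' j ≤ (1 + η / ρ) * ∑ j, y j := by
  have hloss : ∑ j, y j * g j ≤ (∑ j, y j) / ρ := by rwa [le_div_iff₀ hρ, mul_comm]
  calc ∑ j, y' j = ∑ j, y j + η * ∑ j, y j * g j := by
        simp only [hy', mul_sum, ← sum_add_distrib]
        exact sum_congr rfl fun j _ => by ring
    _ ≤ ∑ j, y j + η * ((∑ j, y j) / ρ) := by gcongr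
    _ = (1 + η / ρ) * ∑ j, y j := by ring

lemma sum_le_card_mul_exp_of_mul_update (hη : 0 ≤ η) (hρ : 0 < ρ) {y g : ℕ → ι → ℝ}
    (hy₀ : ∀ j, y 0 j = 1) :
    ∀ {T : ℕ}, (∀ t < T, ρ * ∑ j, y t j * g t j ≤ ∑ j, y t j) →
      (∀ t < T, ∀ j, y (t + 1) j = (1 + η * g t j) * y t j) →
      ∑ j, y T j ≤ Fintype.card ι * Real.exp (η * T / ρ)
  | 0, _, _ => by simp [hy₀]
  | T + 1, horacle, hy => by
    have ih := sum_le_card_mul_exp_of_mul_update hη hρ hy₀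
      (fun t ht => horacle t (ht.trans T.lt_succ_self)) (fun t ht => hy t (ht.trans T.lt_succ_self))
    calc ∑ j, y (T + 1) j ≤ (1 + η / ρ) * ∑ j, y T j :=
          sum_mul_update_le hη hρ (horacle T T.lt_succ_self) (hy T T.lt_succ_self)
      _ ≤ (1 + η / ρ) * (Fintype.card ι * Real.exp (η * T / ρ)) := by gcongr
      _ ≤ Real.exp (η / ρ) * (Fintype.card ι * Real.exp (η * T / ρ)) := by
          gcongr
          linarith [Real.add_one_le_exp (η / ρ)]
      _ = Fintype.card ι * Real.exp (η * ↑(T + 1) / ρ) := by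
          rw [mul_left_comm, ← Real.exp_add]
          push_cast
          ring_nf

lemma mul_one_sub_mul_sum_le_log_card_add (hη : 0 ≤ η) (hρ : 0 < ρ) {T : ℕ}
    {y g : ℕ → ι → ℝ} (hy₀ : ∀ j, y 0 j = 1) (hg : ∀ t < T, ∀ j, 0 ≤ g t j ∧ g t j ≤ 1)
    (horacle : ∀ t < T, ρ * ∑ j, y t j * g t j ≤ ∑ j, y t j)
    (hy : ∀ t < T, ∀ j, y (t + 1) j = (1 + η * g t j) * y t j) (j : ι) :
    η * (1 - η) * ∑ t ∈ range T, g t j ≤ Real.log (Fintype.card ι) + η * T / ρ := by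
  have hweight : ∀ i, Real.exp (η * (1 - η) * ∑ t ∈ range T, g t i) ≤ y T i := fun i =>
    exp_mul_sum_le_of_mul_update (w := fun t => y t i) hη (hy₀ i) (fun t ht => hg t ht i)
      (fun t ht => hy t ht i)
  have hcard : (0 : ℝ) < Fintype.card ι := Nat.cast_pos.2 (Fintype.card_pos_iff.2 ⟨j⟩)
  refine Real.exp_le_exp.1 ?_
  calc Real.exp (η * (1 - η) * ∑ t ∈ range T, g t j) ≤ y T j := hweight j
    _ ≤ ∑ i, y T i :=
        single_le_sum (fun i _ => (Real.exp_pos _).le.trans (hweight i)) (mem_univ j)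
    _ ≤ Fintype.card ι * Real.exp (η * T / ρ) :=
        sum_le_card_mul_exp_of_mul_update hη hρ hy₀ horacle hy
    _ = Real.exp (Real.log (Fintype.card ι) + η * T / ρ) := by rw [Real.exp_add, Real.exp_log hcard]

end Potential

lemma mul_le_one_add_four_mul_of_le_add_div {η ρ L S T : ℝ} (hη₀ : 0 < η) (hη : η < 1 / 2)
    (hρ : 0 < ρ) (hT₀ : 0 ≤ T) (hT : ρ * η⁻¹ ^ 2 * L ≤ T)
    (hS : η * (1 - η) * S ≤ L + η * T / ρ) :
    ρ * S ≤ (1 + 4 * η) * T := by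
  have hL : ρ * L ≤ η ^ 2 * T :=
    calc ρ * L = η ^ 2 * (ρ * η⁻¹ ^ 2 * L) := by field_simp
      _ ≤ η ^ 2 * T := by gcongr
  have hSρ : η * ((1 - η) * (ρ * S)) ≤ η * ((1 + η) * T) :=
    calc η * ((1 - η) * (ρ * S)) = ρ * (η * (1 - η) * S) := by ring
      _ ≤ ρ * (L + η * T / ρ) := by gcongr
      _ = ρ * L + η * T := by field_simp
      _ ≤ η * ((1 + η) * T) := by linarith
  refine le_of_mul_le_mul_left ?_ (by linarith : 0 < 1 - η)
  calc (1 - η) * (ρ * S) ≤ (1 + η) * T := le_of_mul_le_mul_left hSρ hη₀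
    _ ≤ (1 - η) * ((1 + 4 * η) * T) := by
        nlinarith [mul_nonneg (mul_nonneg hη₀.le (by linarith : (0 : ℝ) ≤ 1 - 2 * η)) hT₀]

theorem multiplicative_weights_general {m n : ℕ}
    (A : Matrix (Fin m) (Fin n) ℝ) (b : Fin m → ℝ) (hb : ∀ j, 0 < b j)
    (ρ : ℝ) (hρ : 1 ≤ ρ) (η : ℝ) (hη0 : 0 < η) (hη : η < 1 / 2)
    (T : ℕ) (hT : ρ * η⁻¹ ^ 2 * Real.log m ≤ T)
    (x : ℕ → Fin n → ℝ) (y : ℕ → Fin m → ℝ)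
    (hy0 : ∀ j, y 0 j = 1)
    (hwidth : ∀ t < T, ∀ j, 0 ≤ A.mulVec (x t) j ∧ A.mulVec (x t) j ≤ ρ * b j)
    (horacle : ∀ t < T, ∑ j, y t j * (A.mulVec (x t) j / b j) ≤ ∑ j, y t j)
    (hupdate : ∀ t < T, ∀ j,
      y (t + 1) j = (1 + η * (A.mulVec (x t) j / (ρ * b j))) * y t j) :
    ∀ j, A.mulVec ((T : ℝ)⁻¹ • ∑ t ∈ range T, x t) j ≤ (1 + 4 * η) * b j := by
  intro j
  have hρ0 : 0 < ρ := one_pos.trans_le hρ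
  have hρb : ∀ i, 0 < ρ * b i := fun i => mul_pos hρ0 (hb i)
  set g : ℕ → Fin m → ℝ := fun t i => A.mulVec (x t) i / (ρ * b i) with hg
  have hAx : ∀ t i, A.mulVec (x t) i = ρ * b i * g t i := fun t i => by
    rw [hg, mul_div_cancel₀ _ (hρb i).ne']
  have hg01 : ∀ t < T, ∀ i, 0 ≤ g t i ∧ g t i ≤ 1 := fun t ht i =>
    ⟨div_nonneg (hwidth t ht i).1 (hρb i).le, div_le_one_of_le₀ (hwidth t ht i).2 (hρb i).le⟩
  have horacle' : ∀ t < T, ρ * ∑ i, y t i * g t i ≤ ∑ i, y t i := fun t ht => by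
    convert horacle t ht using 1
    rw [mul_sum]
    exact sum_congr rfl fun i _ => by
      rw [hAx, mul_right_comm ρ, mul_div_cancel_right₀ _ (hb i).ne']
      ring
  have hregret := mul_one_sub_mul_sum_le_log_card_add hη0.le hρ0 hy0 hg01 horacle' hupdate j
  rw [Fintype.card_fin] at hregret
  have hS := mul_le_one_add_four_mul_of_le_add_div hη0 hη hρ0 T.cast_nonneg hT hregret
  have hmean : A.mulVec ((T : ℝ)⁻¹ • ∑ t ∈ range T, x t) j =
      b j * (ρ * ∑ t ∈ range T, g t j) / T := by
    rw [mulVec_smul, mulVec_sum, Pi.smul_apply, Finset.sum_apply, smul_eq_mul]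
    simp only [hAx, ← mul_sum]
    ring
  rw [hmean, mul_comm _ (b j)]
  have hb4 : 0 ≤ b j * (1 + 4 * η) := (mul_pos (hb j) (by linarith)).le
  exact div_le_of_le_mul₀ T.cast_nonneg hb4 (by rw [mul_assoc]; gcongr; exact (hb j).le)

/-- **Multiplicative weights / Plotkin–Shmoys–Tardos guarantee (Theorem 7).**
If a width-`ρ` oracle is consulted for `T ≥ ρ·η⁻²·ln m` rounds (rounds indexed
`0, …, T−1`), producing points `x⁰, …, x^{T−1}` while the row weights `y` are updated
multiplicatively, then the average point `x̄` satisfies `A x̄ ≤ (1 + 4η) b`. -/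
theorem multiplicative_weights {m n : ℕ} (hm : 1 ≤ m) (hn : 1 ≤ n)
    (A : Matrix (Fin m) (Fin n) ℝ) (b : Fin m → ℝ) (hb : ∀ j, 0 < b j)
    (ρ : ℝ) (hρ : 1 ≤ ρ) (η : ℝ) (hη0 : 0 < η) (hη : η < 1 / 2)
    (T : ℕ) (hT1 : 1 ≤ T) (hT : ρ * η⁻¹ ^ 2 * Real.log m ≤ T)
    (x : ℕ → Fin n → ℝ) (y : ℕ → Fin m → ℝ)
    (hy0 : ∀ j, y 0 j = 1)
    (hwidth : ∀ t < T, ∀ j, 0 ≤ A.mulVec (x t) j ∧ A.mulVec (x t) j ≤ ρ * b j)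
    (horacle : ∀ t < T, ∑ j, y t j * (A.mulVec (x t) j / b j) ≤ ∑ j, y t j)
    (hupdate : ∀ t < T, ∀ j,
      y (t + 1) j = (1 + η * (A.mulVec (x t) j / (ρ * b j))) * y t j) :
    ∀ j, A.mulVec ((T : ℝ)⁻¹ • ∑ t ∈ range T, x t) j ≤ (1 + 4 * η) * b j :=
  multiplicative_weights_general A b hb ρ hρ η hη0 hη T hT x y hy0 hwidth horacle hupdate
end

section
/- For every b > 0 there exist constants c, σ, γ ∈ (0,1) such that the following holds for all integers n ≥ 1, d ≥ 1: let U be a finite index set with |U| ≤ n and let {v_x}_{x∈U} be vectors in ℝ^d with ‖v_x‖ ≤ b for every x ∈ U and Σ_{x,y∈U} ‖v_x − v_y‖² = n². Then with probability at least γ over a standard Gaussian vector u ∈ ℝ^d, there exist disjoint sets A, B ⊆ U with |A| ≥ 2cn and |B| ≥ 2cn such that (v_y − v_x)·u ≥ σ for every x ∈ A and y ∈ B. -/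
/-!
Fix a pair `x, y`. The projection `⟪v_y - v_x, u⟫` of a standard Gaussian `u` is a centred
Gaussian of variance `‖v_x - v_y‖²`, so it has absolute value at least `σ = 1/2` with
probability at least `p = P(|Z| ≥ 1)` as soon as `‖v_x - v_y‖ ≥ 1/2`. The squared distances
are at most `4b²` and add up to `n²`, hence the expected number of `σ`-separated pairs is of
order `p n² / b²`; as that number never exceeds `n²`, it is of that order with probability of
order `p / b²`. Whenever more than `4k|U|` pairs of values `h x = ⟪v_x, u⟫` are `σ`-apart,
cut at the smallest level `s` having more than `k` points at or below it: every `σ`-apart pair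
has an end strictly below `s` or in `B = {h ≥ s + σ}`, and at most `k` points lie strictly below
`s`, so `B` has more than `k` points, as does `A = {h ≤ s}`.
-/

open MeasureTheory ProbabilityTheory
open scoped ENNReal NNReal

/-- The standard Gaussian measure `γ_d` on `ℝ^d`. -/
noncomputable def stdGaussian (d : ℕ) : Measure (Fin d → ℝ) :=
  Measure.pi fun _ => gaussianReal 0 1

/-- Euclidean inner product on `ℝ^d`. -/
def dotp {d : ℕ} (u v : Fin d → ℝ) : ℝ := ∑ i, u i * v i

/-- Euclidean norm on `ℝ^d`. -/
noncomputable def vnorm {d : ℕ} (u : Fin d → ℝ) : ℝ := Real.sqrt (∑ i, u i ^ 2)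

open Finset

instance (d : ℕ) : IsProbabilityMeasure (_root_.stdGaussian d) := by
  unfold _root_.stdGaussian; infer_instance

lemma dotp_eq_inner {d : ℕ} (w u : Fin d → ℝ) :
    dotp w u = inner ℝ (WithLp.toLp 2 w : EuclideanSpace ℝ (Fin d)) (WithLp.toLp 2 u) := by
  simp [dotp, PiLp.inner_apply, mul_comm]

lemma dotp_sub {d : ℕ} (a b u : Fin d → ℝ) :
    dotp (fun i => a i - b i) u = dotp a u - dotp b u := by
  simp only [dotp, sub_mul, sum_sub_distrib]

@[fun_prop]
lemma measurable_dotp {d : ℕ} (w : Fin d → ℝ) : Measurable (dotp w) := by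
  unfold dotp; fun_prop

lemma vnorm_eq_norm {d : ℕ} (w : Fin d → ℝ) :
    vnorm w = ‖(WithLp.toLp 2 w : EuclideanSpace ℝ (Fin d))‖ := by
  simp [vnorm, EuclideanSpace.norm_eq]

lemma sum_sq_eq_norm_sq {d : ℕ} (w : Fin d → ℝ) :
    ∑ i, w i ^ 2 = ‖(WithLp.toLp 2 w : EuclideanSpace ℝ (Fin d))‖ ^ 2 := by
  rw [← vnorm_eq_norm, vnorm, Real.sq_sqrt (sum_nonneg fun i _ => sq_nonneg (w i))]

lemma sum_sq_sub_le {d : ℕ} {a b : Fin d → ℝ} {B : ℝ} (ha : vnorm a ≤ B) (hb : vnorm b ≤ B) :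
    ∑ i, (a i - b i) ^ 2 ≤ 4 * B ^ 2 := by
  rw [vnorm_eq_norm] at ha hb
  have h := norm_sub_le (WithLp.toLp 2 a : EuclideanSpace ℝ (Fin d)) (WithLp.toLp 2 b)
  rw [show ∑ i, (a i - b i) ^ 2 = ∑ i, (a - b) i ^ 2 from rfl, sum_sq_eq_norm_sq, WithLp.toLp_sub]
  nlinarith [norm_nonneg (WithLp.toLp 2 a - WithLp.toLp 2 b : EuclideanSpace ℝ (Fin d))]

lemma stdGaussian_eq_map_ofLp (d : ℕ) :
    _root_.stdGaussian d =
      (ProbabilityTheory.stdGaussian (EuclideanSpace ℝ (Fin d))).map WithLp.ofLp := by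
  rw [← map_pi_eq_stdGaussian, Measure.map_map (by fun_prop) (by fun_prop)]
  exact Measure.map_id.symm

lemma map_dotp_stdGaussian {d : ℕ} (w : Fin d → ℝ) :
    (_root_.stdGaussian d).map (dotp w) =
      gaussianReal 0 (‖(WithLp.toLp 2 w : EuclideanSpace ℝ (Fin d))‖₊ ^ 2) := by
  set L := innerSL ℝ (WithLp.toLp 2 w : EuclideanSpace ℝ (Fin d))
  have hL : dotp w ∘ WithLp.ofLp = L := by
    funext u; simp [L, dotp_eq_inner]
  rw [stdGaussian_eq_map_ofLp, Measure.map_map (by fun_prop) (by fun_prop), hL,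
    IsGaussian.map_eq_gaussianReal, integral_strongDual_stdGaussian, variance_dual_stdGaussian,
    innerSL_apply_norm]
  congr
  ext; simp

lemma gaussianReal_one_le_abs_le {v : ℝ≥0} {σ : ℝ} (hσ : σ ^ 2 ≤ v) :
    gaussianReal 0 1 {z | 1 ≤ |z|} ≤ gaussianReal 0 v {x | σ ≤ |x|} := by
  have hv : gaussianReal 0 v = (gaussianReal 0 1).map (√(v : ℝ) * ·) := by
    rw [gaussianReal_map_const_mul]
    congr
    · simp
    · ext; simp
  rw [hv, Measure.map_apply (by fun_prop) (measurableSet_le (by fun_prop) (by fun_prop))]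
  refine measure_mono fun z (hz : 1 ≤ |z|) => ?_
  calc σ ≤ √(σ ^ 2) := (Real.sqrt_sq_eq_abs σ).symm ▸ le_abs_self σ
    _ ≤ √(v : ℝ) := Real.sqrt_le_sqrt hσ
    _ ≤ |√(v : ℝ) * z| := by
      rw [abs_mul, abs_of_nonneg (Real.sqrt_nonneg _)]
      exact le_mul_of_one_le_right (Real.sqrt_nonneg _) hz

lemma gaussianReal_one_le_abs_pos : 0 < gaussianReal 0 1 {z | 1 ≤ |z|} := by
  refine pos_iff_ne_zero.2 fun h => ?_
  have h' := gaussianReal_absolutelyContinuous' 0 one_ne_zero h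
  have : Set.Ici (1 : ℝ) ⊆ {z | 1 ≤ |z|} := fun z (hz : 1 ≤ z) => hz.trans (le_abs_self z)
  simpa using measure_mono_null this h'

lemma gaussianReal_one_le_abs_le_stdGaussian {d : ℕ} (w : Fin d → ℝ) {σ : ℝ}
    (hσ : σ ^ 2 ≤ ∑ i, w i ^ 2) :
    gaussianReal 0 1 {z | 1 ≤ |z|} ≤ _root_.stdGaussian d {u | σ ≤ |dotp w u|} := by
  have hset : {u | σ ≤ |dotp w u|} = dotp w ⁻¹' {x | σ ≤ |x|} := rfl
  rw [hset, ← Measure.map_apply (by fun_prop) (measurableSet_le (by fun_prop) (by fun_prop)),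
    map_dotp_stdGaussian]
  refine gaussianReal_one_le_abs_le ?_
  rwa [NNReal.coe_pow, coe_nnnorm, ← sum_sq_eq_norm_sq]

section Markov

variable {Ω : Type*} [MeasurableSpace Ω] {μ : Measure Ω}

lemma integral_le_add_mul_measureReal_le [IsProbabilityMeasure μ] {F : Ω → ℝ}
    (hF : Measurable F) (hF0 : 0 ≤ F) {t M : ℝ} (ht : 0 ≤ t) (hFM : ∀ ω, F ω ≤ M) :
    ∫ ω, F ω ∂μ ≤ t + M * μ.real {ω | t ≤ F ω} := by
  set S := {ω | t ≤ F ω}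
  have hS : MeasurableSet S := measurableSet_le measurable_const hF
  have hind : Integrable (fun ω => M * S.indicator 1 ω) μ :=
    ((integrable_const 1).indicator hS).const_mul M
  have hpt : ∀ ω, F ω ≤ t + M * S.indicator 1 ω := fun ω => by
    by_cases h : t ≤ F ω
    · simp [S, h, (hFM ω).trans (le_add_of_nonneg_left ht)]
    · simp [S, h, (not_le.1 h).le]
  calc ∫ ω, F ω ∂μ ≤ ∫ ω, t + M * S.indicator 1 ω ∂μ :=
        integral_mono_of_nonneg (.of_forall hF0) ((integrable_const t).add hind) (.of_forall hpt)
    _ = t + M * μ.real S := by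
        rw [integral_add (integrable_const t) hind, integral_const_mul, integral_indicator_one hS]
        simp

end Markov

section CountingEvents

variable {Ω κ : Type*} (P : Finset κ) (p : κ → Ω → Prop) [∀ q ω, Decidable (p q ω)]

lemma natCast_card_filter_eq_sum_indicator (ω : Ω) :
    (#{q ∈ P | p q ω} : ℝ) = ∑ q ∈ P, {ω | p q ω}.indicator 1 ω := by
  rw [natCast_card_filter]
  simp only [Set.indicator_apply, Set.mem_ofPred_eq, Pi.one_apply]

variable [MeasurableSpace Ω] {p}

lemma measurable_natCast_card_filter (hp : ∀ q, MeasurableSet {ω | p q ω}) :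
    Measurable fun ω => (#{q ∈ P | p q ω} : ℝ) := by
  simp_rw [natCast_card_filter_eq_sum_indicator]
  exact Finset.measurable_sum _ fun q _ => (measurable_const (a := (1 : ℝ))).indicator (hp q)

lemma integral_card_filter (μ : Measure Ω) [IsFiniteMeasure μ]
    (hp : ∀ q, MeasurableSet {ω | p q ω}) :
    ∫ ω, (#{q ∈ P | p q ω} : ℝ) ∂μ = ∑ q ∈ P, μ.real {ω | p q ω} := by
  simp_rw [natCast_card_filter_eq_sum_indicator]
  rw [integral_finsetSum _ fun q _ => (integrable_const 1).indicator (hp q)]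
  simp_rw [integral_indicator_one (hp _)]

end CountingEvents

lemma Finset.exists_threshold {ι : Type*} (U : Finset ι) (h : ι → ℝ) {k : ℕ} (hk : k < #U) :
    ∃ s, #{x ∈ U | h x < s} ≤ k ∧ k < #{x ∈ U | h x ≤ s} := by
  set C := {x ∈ U | k < #{y ∈ U | h y ≤ h x}}
  have hC : C.Nonempty := by
    obtain ⟨z, hzU, hz⟩ := U.exists_max_image h (card_pos.1 (Nat.zero_lt_of_lt hk))
    refine ⟨z, mem_filter.2 ⟨hzU, ?_⟩⟩
    rwa [filter_true_of_mem hz]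
  obtain ⟨x₀, hx₀C, hx₀⟩ := C.exists_min_image h hC
  refine ⟨h x₀, not_lt.1 fun hL => ?_, (mem_filter.1 hx₀C).2⟩
  obtain ⟨x₁, hx₁L, hx₁⟩ := exists_max_image _ h (card_pos.1 (Nat.zero_lt_of_lt hL))
  have hx₁C : x₁ ∈ C := mem_filter.2 ⟨(mem_filter.1 hx₁L).1, hL.trans_le (card_le_card
    fun y hy => mem_filter.2 ⟨(mem_filter.1 hy).1, hx₁ y hy⟩)⟩
  exact (hx₀ x₁ hx₁C).not_gt (mem_filter.1 hx₁L).2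

lemma Finset.exists_lt_card_separated {ι : Type*} [DecidableEq ι] (U : Finset ι)
    (h : ι → ℝ) {σ : ℝ} (hσ : 0 < σ) {k : ℕ}
    (hk : 4 * k * #U < #{q ∈ U ×ˢ U | σ ≤ |h q.2 - h q.1|}) :
    ∃ A B : Finset ι, A ⊆ U ∧ B ⊆ U ∧ Disjoint A B ∧ k < #A ∧ k < #B ∧
      ∀ x ∈ A, ∀ y ∈ B, σ ≤ h y - h x := by
  set P := {q ∈ U ×ˢ U | σ ≤ |h q.2 - h q.1|}
  have hkU : k < #U := by
    by_contra! hUk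
    have hPU : #P ≤ #U * #U := (card_filter_le _ _).trans (card_product U U).le
    nlinarith [Nat.mul_le_mul_right (#U) hUk]
  obtain ⟨s, hL, hA⟩ := U.exists_threshold h hkU
  set L := {x ∈ U | h x < s}
  set B := {x ∈ U | s + σ ≤ h x}
  refine ⟨{x ∈ U | h x ≤ s}, B, filter_subset _ _, filter_subset _ _, ?_, hA, ?_, ?_⟩
  · refine disjoint_filter.2 fun x _ hxA hxB => ?_
    linarith
  · by_contra! hB
    have hwindow : ∀ x ∈ U, x ∉ L ∪ B → s ≤ h x ∧ h x < s + σ := fun x hx hx' => by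
      simpa [L, B, hx] using hx'
    -- a pair at distance `≥ σ` cannot have both ends in the window `[s, s + σ)`
    have hsub : P ⊆ (L ∪ B) ×ˢ U ∪ U ×ˢ (L ∪ B) := by
      intro q hq
      obtain ⟨hqU, hqσ⟩ := mem_filter.1 hq
      obtain ⟨hq₁, hq₂⟩ := mem_product.1 hqU
      by_cases h₁ : q.1 ∈ L ∪ B
      · exact mem_union_left _ (mem_product.2 ⟨h₁, hq₂⟩)
      by_cases h₂ : q.2 ∈ L ∪ B
      · exact mem_union_right _ (mem_product.2 ⟨hq₁, h₂⟩)
      obtain ⟨a₁, a₂⟩ := hwindow _ hq₁ h₁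
      obtain ⟨b₁, b₂⟩ := hwindow _ hq₂ h₂
      exact absurd hqσ (not_le.2 (abs_lt.2 ⟨by linarith, by linarith⟩))
    have hLB : #(L ∪ B) ≤ 2 * k := (card_union_le L B).trans (by omega)
    have hP := (card_le_card hsub).trans (card_union_le _ _)
    rw [card_product, card_product] at hP
    nlinarith [Nat.mul_le_mul_right (#U) hLB, Nat.mul_le_mul_left (#U) hLB]
  · intro x hx y hy
    linarith [(mem_filter.1 hx).2, (mem_filter.1 hy).2]

lemma Finset.exists_le_card_separated {ι : Type*} [DecidableEq ι] (U : Finset ι)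
    (h : ι → ℝ) {σ : ℝ} (hσ : 0 < σ) {r : ℝ} (hr : 0 ≤ r)
    (hk : 4 * r * #U < #{q ∈ U ×ˢ U | σ ≤ |h q.2 - h q.1|}) :
    ∃ A B : Finset ι, A ⊆ U ∧ B ⊆ U ∧ Disjoint A B ∧ r ≤ #A ∧ r ≤ #B ∧
      ∀ x ∈ A, ∀ y ∈ B, σ ≤ h y - h x := by
  have hfloor : 4 * ⌊r⌋₊ * #U < #{q ∈ U ×ˢ U | σ ≤ |h q.2 - h q.1|} := by
    have : (4 * ⌊r⌋₊ * #U : ℝ) ≤ 4 * r * #U := by gcongr; exact Nat.floor_le hr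
    exact_mod_cast this.trans_lt hk
  obtain ⟨A, B, hAU, hBU, hAB, hA, hB, hsep⟩ := U.exists_lt_card_separated h hσ hfloor
  have hr' : r ≤ ⌊r⌋₊ + 1 := (Nat.lt_floor_add_one r).le
  exact ⟨A, B, hAU, hBU, hAB, hr'.trans (by exact_mod_cast hA), hr'.trans (by exact_mod_cast hB),
    hsep⟩

noncomputable def separatedPairs {d : ℕ} {ι : Type*} (U : Finset ι) (v : ι → Fin d → ℝ) (σ : ℝ)
    (u : Fin d → ℝ) : Finset (ι × ι) :=
  {q ∈ U ×ˢ U | σ ≤ |dotp (v q.2) u - dotp (v q.1) u|}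

section SeparatedPairs

variable {d : ℕ} {ι : Type*} (U : Finset ι) (v : ι → Fin d → ℝ) (σ : ℝ)

lemma card_separatedPairs_le (u : Fin d → ℝ) : #(separatedPairs U v σ u) ≤ #U * #U :=
  (card_filter_le _ _).trans (card_product U U).le

lemma measurable_card_separatedPairs :
    Measurable fun u => (#(separatedPairs U v σ u) : ℝ) :=
  measurable_natCast_card_filter _ fun _ => measurableSet_le measurable_const (by fun_prop)

variable {U v}

lemma le_integral_card_separatedPairs {B : ℝ} (hB : 0 < B) (hv : ∀ x ∈ U, vnorm (v x) ≤ B) :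
    (gaussianReal 0 1).real {z | 1 ≤ |z|} *
        (∑ x ∈ U, ∑ y ∈ U, ∑ i, (v x i - v y i) ^ 2 - σ ^ 2 * #U ^ 2) / (4 * B ^ 2) ≤
      ∫ u, (#(separatedPairs U v σ u) : ℝ) ∂stdGaussian d := by
  set p := (gaussianReal 0 1).real {z | 1 ≤ |z|}
  have hp : 0 ≤ p := measureReal_nonneg
  unfold separatedPairs
  rw [integral_card_filter _ _ fun q => measurableSet_le measurable_const (by fun_prop),
    ← sum_product' (f := fun x y => ∑ i, (v x i - v y i) ^ 2),
    show σ ^ 2 * (#U : ℝ) ^ 2 = ∑ _q ∈ U ×ˢ U, σ ^ 2 by simp [card_product]; ring,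
    ← sum_sub_distrib, mul_sum, sum_div]
  refine sum_le_sum fun q hq => ?_
  obtain ⟨hq₁, hq₂⟩ := mem_product.1 hq
  set w := fun i => v q.1 i - v q.2 i
  have hw : ∑ i, w i ^ 2 ≤ 4 * B ^ 2 := sum_sq_sub_le (hv _ hq₁) (hv _ hq₂)
  have hevent : {u | σ ≤ |dotp (v q.2) u - dotp (v q.1) u|} = {u | σ ≤ |dotp w u|} := by
    simp only [w, dotp_sub, abs_sub_comm]
  rw [hevent, div_le_iff₀ (by positivity)]
  -- the left side is at most `p` since `‖w‖² ≤ 4B²`, and negative unless `σ ≤ ‖w‖`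
  rcases le_or_gt (σ ^ 2) (∑ i, w i ^ 2) with hσ | hσ
  · have hpμ : p ≤ (stdGaussian d).real {u | σ ≤ |dotp w u|} :=
      ENNReal.toReal_mono (measure_ne_top _ _) (gaussianReal_one_le_abs_le_stdGaussian w hσ)
    nlinarith [sq_nonneg σ]
  · nlinarith [measureReal_nonneg (μ := stdGaussian d) (s := {u | σ ≤ |dotp w u|})]

lemma le_measureReal_card_separatedPairs {B : ℝ} (hB : 0 < B) (hv : ∀ x ∈ U, vnorm (v x) ≤ B)
    {m : ℝ} (hm : 0 < m) (hUm : #U ≤ m)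
    (hsum : ∑ x ∈ U, ∑ y ∈ U, ∑ i, (v x i - v y i) ^ 2 = m ^ 2) :
    (gaussianReal 0 1).real {z | 1 ≤ |z|} / (16 * B ^ 2) ≤ (stdGaussian d).real
      {u | (gaussianReal 0 1).real {z | 1 ≤ |z|} / (16 * B ^ 2) * m ^ 2 ≤
        #(separatedPairs U v (1 / 2) u)} := by
  set a := (gaussianReal 0 1).real {z | 1 ≤ |z|} / (16 * B ^ 2)
  have ha : 0 ≤ a := by positivity
  have hU2 : (#U : ℝ) ^ 2 ≤ m ^ 2 := pow_le_pow_left₀ (Nat.cast_nonneg _) hUm 2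
  have hmean := le_integral_card_separatedPairs (1 / 2) hB hv
  rw [hsum, mul_div_right_comm, show (gaussianReal 0 1).real {z | 1 ≤ |z|} / (4 * B ^ 2) = 4 * a
    by simp only [a]; field_simp; ring] at hmean
  have hmarkov := integral_le_add_mul_measureReal_le (μ := stdGaussian d)
    (measurable_card_separatedPairs U v (1 / 2)) (fun u => Nat.cast_nonneg _)
    (t := a * m ^ 2) (by positivity) (M := m ^ 2) fun u => by
      have hcard : (#(separatedPairs U v (1 / 2) u) : ℝ) ≤ #U * #U := by
        exact_mod_cast card_separatedPairs_le U v _ u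
      nlinarith
  refine le_of_mul_le_mul_left ?_ (by positivity : 0 < m ^ 2)
  nlinarith

end SeparatedPairs

theorem arv_projection_lemma_general (b : ℝ) :
    ∃ c σ γ : ℝ, c ∈ Set.Ioo (0:ℝ) 1 ∧ σ ∈ Set.Ioo (0:ℝ) 1 ∧ γ ∈ Set.Ioo (0:ℝ) 1 ∧
      ∀ n d : ℕ, 1 ≤ n → 1 ≤ d → ∀ (U : Finset (Fin n)) (v : Fin n → Fin d → ℝ),
        (∀ x ∈ U, vnorm (v x) ≤ b) →
        (∑ x ∈ U, ∑ y ∈ U, (∑ i, (v x i - v y i) ^ 2)) = (n : ℝ) ^ 2 →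
        ENNReal.ofReal γ ≤
          stdGaussian d {u | ∃ A B : Finset (Fin n), A ⊆ U ∧ B ⊆ U ∧ Disjoint A B ∧
            2 * c * n ≤ A.card ∧ 2 * c * n ≤ B.card ∧
            ∀ x ∈ A, ∀ y ∈ B, σ ≤ dotp (fun i => v y i - v x i) u} := by
  set β := max b 1
  have hβ : 1 ≤ β := le_max_right b 1
  set p := (gaussianReal 0 1).real {z | 1 ≤ |z|}
  have hp : 0 < p := ENNReal.toReal_pos gaussianReal_one_le_abs_pos.ne' (measure_ne_top _ _)
  have hp1 : p ≤ 1 := measureReal_le_one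
  set a := p / (16 * β ^ 2)
  have ha : 0 < a := by positivity
  have ha1 : a < 1 := by
    rw [div_lt_one (by positivity)]; nlinarith
  refine ⟨a / 16, 1 / 2, a, ⟨by positivity, by linarith⟩, by norm_num, ⟨ha, ha1⟩,
    fun n d hn _ U v hv hsum => ?_⟩
  have hn0 : (0 : ℝ) < n := by exact_mod_cast hn
  have hUn : (#U : ℝ) ≤ n := by exact_mod_cast (card_le_univ U).trans_eq (Fintype.card_fin n)
  refine (ENNReal.ofReal_le_ofReal (le_measureReal_card_separatedPairs (by positivity)
    (fun x hx => (hv x hx).trans (le_max_left b 1)) hn0 hUn hsum)).trans ?_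
  rw [ofReal_measureReal]
  refine measure_mono fun u (hu : a * n ^ 2 ≤ #(separatedPairs U v (1 / 2) u)) => ?_
  have hcount : 4 * (2 * (a / 16) * n) * #U < (#(separatedPairs U v (1 / 2) u) : ℝ) := by
    nlinarith [mul_le_mul_of_nonneg_left hUn (by positivity : 0 ≤ a * n),
      (by positivity : 0 < a * n ^ 2)]
  obtain ⟨A, B, hAU, hBU, hAB, hA, hB, hsep⟩ := U.exists_le_card_separated
    (fun x => dotp (v x) u) (by norm_num : (0 : ℝ) < 1 / 2) (by positivity) hcount
  exact ⟨A, B, hAU, hBU, hAB, hA, hB, fun x hx y hy => (dotp_sub _ _ u).symm ▸ hsep x hx y hy⟩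

/-- **Lemma (ARV projection lemma, Lemma 4).** For every bound `b > 0` there are
constants `c, σ, γ ∈ (0,1)` such that for all `n ≥ 1`, `d ≥ 1` and every family of
vectors `{v_x}_{x ∈ U}` (indexed by `U ⊆ [n]`) with `‖v_x‖ ≤ b` and
`Σ_{x,y ∈ U} ‖v_x − v_y‖² = n²`, with probability at least `γ` over a standard
Gaussian `u` there are disjoint `A, B ⊆ U` of size at least `2cn` each with
`(v_y − v_x)·u ≥ σ` for every `x ∈ A`, `y ∈ B`. -/
theorem arv_projection_lemma (b : ℝ) (hb : 0 < b) :
    ∃ c σ γ : ℝ, c ∈ Set.Ioo (0:ℝ) 1 ∧ σ ∈ Set.Ioo (0:ℝ) 1 ∧ γ ∈ Set.Ioo (0:ℝ) 1 ∧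
      ∀ n d : ℕ, 1 ≤ n → 1 ≤ d → ∀ (U : Finset (Fin n)) (v : Fin n → Fin d → ℝ),
        (∀ x ∈ U, vnorm (v x) ≤ b) →
        (∑ x ∈ U, ∑ y ∈ U, (∑ i, (v x i - v y i) ^ 2)) = (n : ℝ) ^ 2 →
        ENNReal.ofReal γ ≤
          stdGaussian d {u | ∃ A B : Finset (Fin n), A ⊆ U ∧ B ⊆ U ∧ Disjoint A B ∧
            2 * c * n ≤ A.card ∧ 2 * c * n ≤ B.card ∧
            ∀ x ∈ A, ∀ y ∈ B, σ ≤ dotp (fun i => v y i - v x i) u} :=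
  arv_projection_lemma_general b
end

section
/- Let n ≥ 1 be an integer, let c > 0 with cn ≥ 1, and let κ > 0. Let V be a set of n vertices equipped with symmetric nonnegative edge weights G_{xy} (x, y ∈ V), and let A, B ⊆ V be disjoint sets each of size at least 2cn. Suppose S ⊆ V satisfies κ·|A ∖ S| + κ·|B ∩ S| + Σ_{x∈S, y∈V∖S} G_{xy} ≤ κ·c·n. Then min(|S|, |V∖S|) ≥ cn, and the cut (S, V∖S) has edge expansion at most κ, i.e. Σ_{x∈S, y∈V∖S} G_{xy} ≤ κ·min(|S|, |V∖S|). -/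
open Finset

/-- **Lemma 5 (FlowAndCut cut guarantee).** Let `V` be a set of `n` vertices with
symmetric nonnegative edge weights `G`, let `A, B ⊆ V` be disjoint sets of size at
least `2cn` each, with `cn ≥ 1` and `κ > 0`. If `S ⊆ V` satisfies
`κ·|A∖S| + κ·|B∩S| + Σ_{x∈S, y∉S} G x y ≤ κ·c·n`, then both sides of the cut
`(S, V∖S)` have at least `cn` vertices and the cut has edge expansion at most `κ`. -/
theorem flow_and_cut_guarantee {V : Type*} [Fintype V] [DecidableEq V]
    (n : ℕ) (hn : 1 ≤ n) (hcard : Fintype.card V = n)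
    (c : ℝ) (hc : 0 < c) (hcn : 1 ≤ c * n) (κ : ℝ) (hκ : 0 < κ)
    (G : V → V → ℝ) (hGsymm : ∀ x y, G x y = G y x) (hGpos : ∀ x y, 0 ≤ G x y)
    (A B : Finset V) (hAB : Disjoint A B)
    (hA : 2 * c * n ≤ A.card) (hB : 2 * c * n ≤ B.card)
    (S : Finset V)
    (hcut : κ * (A \ S).card + κ * (B ∩ S).card +
        (∑ x ∈ S, ∑ y ∈ Sᶜ, G x y) ≤ κ * c * n) :
    c * n ≤ min (S.card : ℝ) (Sᶜ.card : ℝ) ∧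
      (∑ x ∈ S, ∑ y ∈ Sᶜ, G x y) ≤ κ * min (S.card : ℝ) (Sᶜ.card : ℝ) := by
  have hsum : (0 : ℝ) ≤ ∑ x ∈ S, ∑ y ∈ Sᶜ, G x y :=
    Finset.sum_nonneg fun x _ => Finset.sum_nonneg fun y _ => hGpos x y
  have hBS0 : (0 : ℝ) ≤ (B ∩ S).card := Nat.cast_nonneg _
  have hAS0 : (0 : ℝ) ≤ (A \ S).card := Nat.cast_nonneg _
  -- |A \ S| ≤ c n and |B ∩ S| ≤ c n
  have hAS : ((A \ S).card : ℝ) ≤ c * n := by nlinarith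
  have hBS : ((B ∩ S).card : ℝ) ≤ c * n := by nlinarith
  -- |S| ≥ cn
  have hA' : (A ∩ S).card + (A \ S).card = A.card := Finset.card_inter_add_card_sdiff A S
  have hB' : (B ∩ S).card + (B \ S).card = B.card := by
    have := Finset.card_inter_add_card_sdiff B S
    omega
  have hScard : c * n ≤ (S.card : ℝ) := by
    have h1 : ((A ∩ S).card : ℝ) ≤ S.card := by
      exact_mod_cast Finset.card_le_card (Finset.inter_subset_right)
    have h2 : ((A ∩ S).card : ℝ) + ((A \ S).card : ℝ) = A.card := by exact_mod_cast hA'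
    nlinarith
  have hSccard : c * n ≤ (Sᶜ.card : ℝ) := by
    have hsub : B \ S ⊆ Sᶜ := fun x hx => by
      simp only [Finset.mem_compl]
      exact (Finset.mem_sdiff.1 hx).2
    have h1 : ((B \ S).card : ℝ) ≤ Sᶜ.card := by exact_mod_cast Finset.card_le_card hsub
    have h2 : ((B ∩ S).card : ℝ) + ((B \ S).card : ℝ) = B.card := by exact_mod_cast hB'
    nlinarith
  have hmin : c * n ≤ min (S.card : ℝ) (Sᶜ.card : ℝ) := le_min hScard hSccard
  refine ⟨hmin, ?_⟩
  have : (∑ x ∈ S, ∑ y ∈ Sᶜ, G x y) ≤ κ * (c * n) := by nlinarith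
  calc (∑ x ∈ S, ∑ y ∈ Sᶜ, G x y) ≤ κ * (c * n) := this
    _ ≤ κ * min (S.card : ℝ) (Sᶜ.card : ℝ) := by
        exact mul_le_mul_of_nonneg_left hmin hκ.le
end

section
/- For every constant c > 0 there exists a constant C > 0 (depending only on c) such that the following holds. Let n ≥ 2 be even, let v_1, …, v_n ∈ ℝ^d, and let r > 0 be such that for every S ⊆ [n] with |S| ≤ n/2, the number of indices x ∈ [n] with min_{s∈S} ‖v_x − v_s‖ ≤ √r is at least (1+c)·|S|. Then for every bisection (S, S̄) of [n] (|S| = n/2) there exists a perfect matching M of [n], each edge of which has one endpoint in S and one in S̄, with Σ_{{x,y}∈M} ‖v_x − v_y‖² ≤ C·n·r. -/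
open Finset

/-- Euclidean distance on `ℝ^d`. -/
noncomputable def vdist {d : ℕ} (u v : Fin d → ℝ) : ℝ := Real.sqrt (∑ i, (u i - v i) ^ 2)

/-!
While `k` pairs remain to be matched, let `A` and `B` be the unmatched points on the two sides
of the bisection. By expansion, each round of taking `√r`-neighbourhoods multiplies the size of
a set by `1 + c` until it exceeds `n / 2`; after `j_k ≈ 1 + log_{1+c} (n / 2k)` rounds the
neighbourhoods of `A` and of `B` both exceed `n / 2`, so they meet, and some `a ∈ A`, `b ∈ B`
lie within `2 j_k √r` of each other. Matching them costs at most `4 j_k² r`, and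
`∑_{k ≤ n/2} j_k² = O(n)` because `log² t ≤ 16 √t` and `∑_{k ≤ K} √(K / k) ≤ 2 K`.
-/

noncomputable def growthSteps (c : ℝ) (K k : ℕ) : ℕ :=
  ⌊Real.log (K / k) / Real.log (1 + c)⌋₊ + 1

section GrowthSteps

variable {c : ℝ} {K k : ℕ}

lemma lt_one_add_pow_growthSteps_mul (hc : 0 < c) (hk : 0 < k) :
    (K : ℝ) < (1 + c) ^ growthSteps c K k * k := by
  have hk' : (0 : ℝ) < k := by exact_mod_cast hk
  rcases K.eq_zero_or_pos with rfl | hK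
  · simp only [CharP.cast_eq_zero]; positivity
  have hL : 0 < Real.log (1 + c) := Real.log_pos (by linarith)
  have hlog : Real.log (K / k) < growthSteps c K k * Real.log (1 + c) := by
    rw [← div_lt_iff₀ hL, growthSteps, Nat.cast_add_one]
    exact Nat.lt_floor_add_one _
  rw [← div_lt_iff₀ hk', Real.lt_pow_iff_log_lt (by positivity) (by linarith)]
  exact hlog

lemma log_sq_le_sqrt {t : ℝ} (ht : 1 ≤ t) : Real.log t ^ 2 ≤ 16 * Real.sqrt t := by
  have h : Real.log t ≤ 4 * t ^ (1 / 4 : ℝ) := by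
    have := Real.log_le_rpow_div (by linarith : (0 : ℝ) ≤ t) (by norm_num : (0 : ℝ) < 1 / 4)
    linarith [show t ^ (1 / 4 : ℝ) / (1 / 4) = 4 * t ^ (1 / 4 : ℝ) by ring]
  calc Real.log t ^ 2 ≤ (4 * t ^ (1 / 4 : ℝ)) ^ 2 := by gcongr; exact Real.log_nonneg ht
    _ = 16 * Real.sqrt t := by
      rw [mul_pow, ← Real.rpow_natCast (t ^ _), ← Real.rpow_mul (by linarith),
        Real.sqrt_eq_rpow]
      norm_num

lemma growthSteps_sq_le (hc : 0 < c) (hk : 0 < k) (hkK : k ≤ K) :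
    (growthSteps c K k : ℝ) ^ 2 ≤ 2 + 32 / Real.log (1 + c) ^ 2 * Real.sqrt (K / k) := by
  set L := Real.log (1 + c)
  have hL : 0 < L := Real.log_pos (by linarith)
  have ht : (1 : ℝ) ≤ K / k := by
    rw [one_le_div (by exact_mod_cast hk)]; exact_mod_cast hkK
  have hj : (growthSteps c K k : ℝ) - 1 ≤ Real.log (K / k) / L := by
    rw [growthSteps, Nat.cast_add_one, add_sub_cancel_right]
    exact Nat.floor_le (div_nonneg (Real.log_nonneg ht) hL.le)
  have hj1 : (1 : ℝ) ≤ growthSteps c K k := by simp [growthSteps]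
  calc (growthSteps c K k : ℝ) ^ 2 ≤ 2 + 2 * (growthSteps c K k - 1) ^ 2 := by
        nlinarith [sq_nonneg ((growthSteps c K k : ℝ) - 2)]
    _ ≤ 2 + 2 * (Real.log (K / k) / L) ^ 2 := by gcongr
    _ = 2 + 2 / L ^ 2 * Real.log (K / k) ^ 2 := by ring
    _ ≤ 2 + 2 / L ^ 2 * (16 * Real.sqrt (K / k)) := by gcongr; exact log_sq_le_sqrt ht
    _ = 2 + 32 / L ^ 2 * Real.sqrt (K / k) := by ring

lemma sum_inv_sqrt_le (K : ℕ) : ∑ i ∈ Icc 1 K, (Real.sqrt i)⁻¹ ≤ 2 * Real.sqrt K := by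
  induction K with
  | zero => simp
  | succ K ih =>
    rw [sum_Icc_succ_top (by omega), Nat.cast_add_one]
    have hpos : 0 < Real.sqrt (K + 1) := Real.sqrt_pos.mpr (by positivity)
    have hK : Real.sqrt (K + 1) ^ 2 = K + 1 := Real.sq_sqrt (by positivity)
    have hK' : Real.sqrt K ^ 2 = K := Real.sq_sqrt (by positivity)
    -- `(√(K+1))⁻¹ ≤ 2 / (√(K+1) + √K) = 2 (√(K+1) - √K)`
    have step : (Real.sqrt (K + 1))⁻¹ ≤ 2 * Real.sqrt (K + 1) - 2 * Real.sqrt K := by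
      rw [inv_le_iff_one_le_mul₀' hpos]
      nlinarith [Real.sqrt_nonneg K, Real.sqrt_le_sqrt (by linarith : (K : ℝ) ≤ K + 1)]
    linarith

lemma sum_growthSteps_sq_le (hc : 0 < c) (K : ℕ) :
    ∑ i ∈ Icc 1 K, (growthSteps c K i : ℝ) ^ 2 ≤ (2 + 64 / Real.log (1 + c) ^ 2) * K := by
  set L := Real.log (1 + c)
  have hsqrt : ∑ i ∈ Icc 1 K, Real.sqrt (K / i) ≤ 2 * K := by
    simp_rw [Real.sqrt_div' _ (Nat.cast_nonneg _), div_eq_mul_inv, ← mul_sum]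
    calc Real.sqrt K * ∑ i ∈ Icc 1 K, (Real.sqrt i)⁻¹
        ≤ Real.sqrt K * (2 * Real.sqrt K) := by gcongr; exact sum_inv_sqrt_le K
      _ = 2 * K := by rw [mul_left_comm, Real.mul_self_sqrt (Nat.cast_nonneg _)]
  calc ∑ i ∈ Icc 1 K, (growthSteps c K i : ℝ) ^ 2
      ≤ ∑ i ∈ Icc 1 K, (2 + 32 / L ^ 2 * Real.sqrt (K / i)) := by
        gcongr with i hi
        rw [mem_Icc] at hi
        exact growthSteps_sq_le hc hi.1 hi.2
    _ = 2 * K + 32 / L ^ 2 * ∑ i ∈ Icc 1 K, Real.sqrt (K / i) := by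
        rw [sum_add_distrib, sum_const, Nat.card_Icc, ← mul_sum, nsmul_eq_mul]
        simp only [add_tsub_cancel_right]; ring
    _ ≤ 2 * K + 32 / L ^ 2 * (2 * K) := by gcongr
    _ = (2 + 64 / L ^ 2) * K := by ring

end GrowthSteps

section IndexBall

variable {ι X : Type*} [Fintype ι] [PseudoMetricSpace X] (p : ι → X) (ρ : ℝ)

/-- The paper's `Ball[A; ρ]`. -/
noncomputable def indexBall (A : Finset ι) : Finset ι :=
  univ.filter fun x => ∃ s ∈ A, dist (p x) (p s) ≤ ρ

variable {p ρ}

lemma mem_indexBall {A : Finset ι} {x : ι} :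
    x ∈ indexBall p ρ A ↔ ∃ s ∈ A, dist (p x) (p s) ≤ ρ := by
  simp [indexBall]

lemma subset_indexBall (hρ : 0 ≤ ρ) (A : Finset ι) : A ⊆ indexBall p ρ A :=
  fun a ha => mem_indexBall.mpr ⟨a, ha, by rwa [dist_self]⟩

lemma exists_dist_le_of_mem_iterate_indexBall {A : Finset ι} {j : ℕ} {x : ι}
    (hx : x ∈ (indexBall p ρ)^[j] A) : ∃ a ∈ A, dist (p x) (p a) ≤ j * ρ := by
  induction j generalizing x with
  | zero => exact ⟨x, hx, by simp⟩
  | succ j ih =>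
    rw [Function.iterate_succ_apply', mem_indexBall] at hx
    obtain ⟨s, hs, hxs⟩ := hx
    obtain ⟨a, ha, hsa⟩ := ih hs
    refine ⟨a, ha, ?_⟩
    calc dist (p x) (p a) ≤ dist (p x) (p s) + dist (p s) (p a) := dist_triangle _ _ _
      _ ≤ ρ + j * ρ := add_le_add hxs hsa
      _ = (j + 1 : ℕ) * ρ := by push_cast; ring

variable {c : ℝ} {K : ℕ}

def IsExpanding (p : ι → X) (ρ c : ℝ) (K : ℕ) : Prop :=
  ∀ S : Finset ι, #S ≤ K → (1 + c) * #S ≤ (#(indexBall p ρ S) : ℝ)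

lemma lt_card_iterate_indexBall_or_le (hc : 0 ≤ c) (hρ : 0 ≤ ρ) (hexp : IsExpanding p ρ c K)
    (A : Finset ι) (j : ℕ) :
    K < #((indexBall p ρ)^[j] A) ∨ (1 + c) ^ j * #A ≤ (#((indexBall p ρ)^[j] A) : ℝ) := by
  induction j with
  | zero => simp
  | succ j ih =>
    rw [Function.iterate_succ_apply']
    set B := (indexBall p ρ)^[j] A
    have hB : #B ≤ #(indexBall p ρ B) := card_le_card (subset_indexBall hρ B)
    by_cases hBK : K < #B
    · exact .inl (hBK.trans_le hB)
    refine .inr ?_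
    have hgrow : (1 + c) ^ j * #A ≤ (#B : ℝ) := ih.resolve_left hBK
    calc (1 + c) ^ (j + 1) * #A = (1 + c) * ((1 + c) ^ j * #A) := by ring
      _ ≤ (1 + c) * #B := by gcongr
      _ ≤ #(indexBall p ρ B) := hexp B (not_lt.mp hBK)

lemma exists_dist_le_of_isExpanding (hc : 0 ≤ c) (hρ : 0 ≤ ρ) (hexp : IsExpanding p ρ c K)
    (hcard : Fintype.card ι ≤ 2 * K + 1) {A B : Finset ι} {k j : ℕ}
    (hA : #A = k) (hB : #B = k) (hj : (K : ℝ) < (1 + c) ^ j * k) :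
    ∃ a ∈ A, ∃ b ∈ B, dist (p a) (p b) ≤ 2 * j * ρ := by
  classical
  have hlarge : ∀ X : Finset ι, #X = k → K < #((indexBall p ρ)^[j] X) := by
    intro X hX
    rcases lt_card_iterate_indexBall_or_le hc hρ hexp X j with h | h
    · exact h
    · rw [hX] at h; exact_mod_cast hj.trans_le h
  obtain ⟨z, hz⟩ : ((indexBall p ρ)^[j] A ∩ (indexBall p ρ)^[j] B).Nonempty := by
    rw [← card_pos]
    have := card_union_add_card_inter ((indexBall p ρ)^[j] A) ((indexBall p ρ)^[j] B)
    have := card_le_univ ((indexBall p ρ)^[j] A ∪ (indexBall p ρ)^[j] B)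
    have := hlarge A hA
    have := hlarge B hB
    omega
  obtain ⟨hzA, hzB⟩ := mem_inter.mp hz
  obtain ⟨a, ha, hza⟩ := exists_dist_le_of_mem_iterate_indexBall hzA
  obtain ⟨b, hb, hzb⟩ := exists_dist_le_of_mem_iterate_indexBall hzB
  refine ⟨a, ha, b, hb, ?_⟩
  calc dist (p a) (p b) ≤ dist (p z) (p a) + dist (p z) (p b) := dist_triangle_left _ _ _
    _ ≤ j * ρ + j * ρ := add_le_add hza hzb
    _ = 2 * j * ρ := by ring

lemma exists_bijOn_sum_dist_sq_le (hc : 0 < c) (hρ : 0 ≤ ρ) (hexp : IsExpanding p ρ c K)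
    (hcard : Fintype.card ι ≤ 2 * K + 1) (k : ℕ) :
    ∀ A B : Finset ι, #A = k → #B = k → ∃ g : ι → ι, Set.BijOn g A B ∧
      ∑ x ∈ A, dist (p x) (p (g x)) ^ 2 ≤
        4 * ρ ^ 2 * ∑ i ∈ Icc 1 k, (growthSteps c K i : ℝ) ^ 2 := by
  classical
  induction k with
  | zero =>
    intro A B hA hB
    rw [card_eq_zero] at hA hB
    subst hA hB
    exact ⟨id, by simp⟩
  | succ k ih =>
    intro A B hA hB
    obtain ⟨a, ha, b, hb, hab⟩ := exists_dist_le_of_isExpanding hc.le hρ hexp hcard hA hB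
      (lt_one_add_pow_growthSteps_mul hc k.succ_pos)
    obtain ⟨g, hg, hgsum⟩ := ih (A.erase a) (B.erase b)
      (by rw [card_erase_of_mem ha, hA, Nat.add_sub_cancel])
      (by rw [card_erase_of_mem hb, hB, Nat.add_sub_cancel])
    have hbij : Set.BijOn (Function.update g a b) (A.erase a) (B.erase b) :=
      hg.congr fun x hx => (Function.update_of_ne (mem_erase.mp hx).1 _ _).symm
    refine ⟨Function.update g a b, ?_, ?_⟩
    · rw [← insert_erase ha, ← insert_erase hb, coe_insert, coe_insert]
      simpa using hbij.insert (a := a) (by simp)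
    · rw [← add_sum_erase A _ ha, sum_Icc_succ_top (by omega), Function.update_self,
        mul_add]
      have hsum : ∑ x ∈ A.erase a, dist (p x) (p (Function.update g a b x)) ^ 2 =
          ∑ x ∈ A.erase a, dist (p x) (p (g x)) ^ 2 :=
        sum_congr rfl fun x hx => by rw [Function.update_of_ne (mem_erase.mp hx).1]
      have hpair : dist (p a) (p b) ^ 2 ≤ 4 * ρ ^ 2 * (growthSteps c K (k + 1) : ℝ) ^ 2 := by
        calc dist (p a) (p b) ^ 2 ≤ (2 * growthSteps c K (k + 1) * ρ) ^ 2 := by gcongr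
          _ = _ := by ring
      linarith

lemma natCard_setOf_eq_card_indexBall (S : Finset ι) :
    Nat.card {x | ∃ s ∈ S, dist (p x) (p s) ≤ ρ} = #(indexBall p ρ S) := by
  classical
  rw [Nat.card_eq_card_toFinset]
  congr 1
  ext x
  simp [indexBall]

end IndexBall

lemma exists_involutive_of_bijOn_compl {ι : Type*} [Nonempty ι] {S : Set ι} {g : ι → ι}
    (hg : Set.BijOn g S Sᶜ) :
    ∃ f : ι → ι, Function.Involutive f ∧ (∀ x, x ∈ S ↔ f x ∉ S) ∧ Set.EqOn f g S := by
  classical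
  have hinv := hg.invOn_invFunOn
  have hmem : ∀ x ∉ S, Function.invFunOn g S x ∈ S := fun x hx => hg.surjOn.mapsTo_invFunOn hx
  refine ⟨S.piecewise g (Function.invFunOn g S), fun x => ?_, fun x => ?_,
    fun x hx => Set.piecewise_eq_of_mem _ _ _ hx⟩
  · by_cases hx : x ∈ S
    · rw [Set.piecewise_eq_of_mem _ _ _ hx, Set.piecewise_eq_of_notMem _ _ _ (hg.mapsTo hx)]
      exact hinv.1 hx
    · rw [Set.piecewise_eq_of_notMem _ _ _ hx, Set.piecewise_eq_of_mem _ _ _ (hmem x hx)]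
      exact hinv.2 hx
  · by_cases hx : x ∈ S
    · simpa [Set.piecewise_eq_of_mem _ _ _ hx, hx] using hg.mapsTo hx
    · simpa [Set.piecewise_eq_of_notMem _ _ _ hx, hx] using hmem x hx

lemma sum_apply_involutive_eq_two_nsmul {ι M : Type*} [Fintype ι] [AddCommMonoid M]
    {f : ι → ι} (hf : Function.Involutive f) {S : Finset ι} (hS : ∀ x, x ∈ S ↔ f x ∉ S)
    {φ : ι → ι → M} (hφ : ∀ x y, φ x y = φ y x) :
    ∑ x, φ x (f x) = 2 • ∑ x ∈ S, φ x (f x) := by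
  classical
  rw [← sum_add_sum_compl S, two_nsmul]
  congr 1
  refine sum_nbij' f f (fun x hx => ?_) (fun x hx => mem_compl.mpr ((hS x).mp hx))
    (fun x _ => hf x) (fun x _ => hf x) (fun x _ => by rw [hf x, hφ])
  exact (hS (f x)).mpr (by rwa [hf x, ← mem_compl])

lemma sum_sq_sub_eq_dist_sq {d : ℕ} (u w : Fin d → ℝ) :
    ∑ i, (u i - w i) ^ 2 = dist (WithLp.toLp 2 u) (WithLp.toLp 2 w) ^ 2 := by
  rw [EuclideanSpace.dist_eq, Real.sq_sqrt (by positivity)]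
  simp [Real.dist_eq, sq_abs]

lemma vdist_eq_dist {d : ℕ} (u w : Fin d → ℝ) :
    vdist u w = dist (WithLp.toLp 2 u) (WithLp.toLp 2 w) := by
  rw [vdist, sum_sq_sub_eq_dist_sq, Real.sqrt_sq dist_nonneg]

/-- **Lemma 15 (greedy matching under vertex expansion).** For every `c > 0` there is
`C > 0` such that: if `n ≥ 2` is even and `v_1, …, v_n ∈ ℝ^d` satisfy the vertex
expansion condition `|Ball[S;√r]| ≥ (1+c)|S|` for every `S` with `|S| ≤ n/2`, then for
every bisection `(S, S̄)` there is a perfect matching crossing the bisection (encoded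
as a fixpoint-free involution `f` exchanging `S` and its complement) whose total
squared length `Σ_{{x,y}∈M} ‖v_x − v_y‖² = (1/2)·Σ_x ‖v_x − v_{f(x)}‖²` is at most
`C·n·r`. -/
theorem greedy_matching (c : ℝ) (hc : 0 < c) :
    ∃ C : ℝ, 0 < C ∧
      ∀ n d : ℕ, 2 ≤ n → Even n → ∀ (v : Fin n → Fin d → ℝ) (r : ℝ), 0 < r →
        (∀ S : Finset (Fin n), S.card ≤ n / 2 →
          (1 + c) * S.card ≤
            (Nat.card {x : Fin n | ∃ s ∈ S, vdist (v x) (v s) ≤ Real.sqrt r} : ℝ)) →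
        ∀ S : Finset (Fin n), S.card = n / 2 →
          ∃ f : Fin n → Fin n, Function.Involutive f ∧ (∀ x, f x ≠ x) ∧
            (∀ x, x ∈ S ↔ f x ∉ S) ∧
            (∑ x : Fin n, ∑ i : Fin d, (v x i - v (f x) i) ^ 2) ≤ 2 * C * n * r := by
  set A := 2 + 64 / Real.log (1 + c) ^ 2
  refine ⟨2 * A, by positivity, fun n d hn heven v r hr hyp S hS => ?_⟩
  have : Nonempty (Fin n) := ⟨⟨0, by omega⟩⟩
  set p : Fin n → EuclideanSpace ℝ (Fin d) := fun x => WithLp.toLp 2 (v x)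
  have hexp : IsExpanding p (Real.sqrt r) c (n / 2) := fun T hT => by
    simpa only [vdist_eq_dist, natCard_setOf_eq_card_indexBall] using hyp T hT
  have hn2 : n / 2 * 2 = n := Nat.div_two_mul_two_of_even heven
  have hn2' : (n : ℝ) = (n / 2 : ℕ) * 2 := by exact_mod_cast hn2.symm
  obtain ⟨g, hg, hgsum⟩ := exists_bijOn_sum_dist_sq_le hc (Real.sqrt_nonneg r) hexp
    (by rw [Fintype.card_fin]; omega) (n / 2) S Sᶜ hS
    (by rw [card_compl, Fintype.card_fin, hS]; omega)
  obtain ⟨f, hf, hfS, hfg⟩ := exists_involutive_of_bijOn_compl (S := (S : Set (Fin n)))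
    (by rwa [← coe_compl])
  refine ⟨f, hf, fun x hx => by simpa [hx] using hfS x, hfS, ?_⟩
  calc ∑ x, ∑ i, (v x i - v (f x) i) ^ 2 = ∑ x, dist (p x) (p (f x)) ^ 2 := by
        simp only [p, sum_sq_sub_eq_dist_sq]
    _ = 2 * ∑ x ∈ S, dist (p x) (p (g x)) ^ 2 := by
        rw [sum_apply_involutive_eq_two_nsmul hf hfS (φ := fun x y => dist (p x) (p y) ^ 2)
          (fun x y => by rw [dist_comm]),
          nsmul_eq_mul, sum_congr rfl fun x hx => by rw [hfg hx]]
        norm_num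
    _ ≤ 2 * (4 * Real.sqrt r ^ 2 * (A * (n / 2 : ℕ))) := by
        grw [hgsum, sum_growthSteps_sq_le hc]
    _ = 2 * (2 * A) * n * r := by
        rw [Real.sq_sqrt hr.le, hn2']; ring
end

section
/- Let d, k ≥ 1 be integers, let U be a uniformly random d×k matrix with independent entries uniform in {−1, +1}, let 𝟙 ∈ ℝ^k be the vector all of whose coordinates equal 1/√k, and let v ∈ ℝ^d be any vector. Then Pr[ (v·(U𝟙))² ≥ ‖v‖²/4 ] ≥ 1/5. -/
open Finset

/-- The `±1` value encoded by a Boolean. -/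
def signVal (b : Bool) : ℝ := if b then 1 else -1

lemma pm_count (n : ℕ) : ∑ _s : Fin n → Bool, (1:ℝ) = 2 ^ n := by
  simp [Finset.card_univ]

lemma pm_cons_sum (n : ℕ) (w : Fin (n+1) → ℝ) (b : Bool) (s' : Fin n → Bool) :
    (∑ i : Fin (n+1), w i * signVal ((Fin.consEquiv fun _ => Bool) (b, s') i)) =
      w 0 * signVal b + ∑ i : Fin n, w i.succ * signVal (s' i) := by
  rw [Fin.sum_univ_succ]
  simp [Fin.consEquiv]

lemma pm_moment2 : ∀ (n : ℕ) (w : Fin n → ℝ),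
    ∑ s : Fin n → Bool, (∑ i, w i * signVal (s i)) ^ 2 = 2 ^ n * ∑ i, w i ^ 2 := by
  intro n
  induction n with
  | zero => intro w; simp
  | succ n ih =>
    intro w
    rw [← Equiv.sum_comp (Fin.consEquiv fun _ => Bool), Fintype.sum_prod_type]
    simp only [pm_cons_sum]
    rw [Fintype.sum_bool]
    have hT : signVal true = 1 := rfl
    have hF : signVal false = -1 := rfl
    rw [hT, hF]
    have expand : ∀ A : ℝ, (w 0 * 1 + A) ^ 2 + (w 0 * (-1) + A) ^ 2
        = 2 * (w 0 ^ 2) + 2 * A ^ 2 := by intro A; ring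
    rw [← Finset.sum_add_distrib]
    simp only [expand]
    rw [Finset.sum_add_distrib, ← Finset.mul_sum, ← Finset.mul_sum, ih (fun i => w i.succ),
      Finset.sum_const, Finset.card_univ, Fin.sum_univ_succ (fun i => w i ^ 2)]
    simp only [Fintype.card_fun, Fintype.card_bool, Fintype.card_fin, smul_eq_mul]
    push_cast
    ring

lemma pm_moment4 : ∀ (n : ℕ) (w : Fin n → ℝ),
    ∑ s : Fin n → Bool, (∑ i, w i * signVal (s i)) ^ 4
      ≤ 3 * 2 ^ n * (∑ i, w i ^ 2) ^ 2 := by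
  intro n
  induction n with
  | zero => intro w; simp
  | succ n ih =>
    intro w
    rw [← Equiv.sum_comp (Fin.consEquiv fun _ => Bool), Fintype.sum_prod_type]
    simp only [pm_cons_sum]
    rw [Fintype.sum_bool]
    have hT : signVal true = 1 := rfl
    have hF : signVal false = -1 := rfl
    rw [hT, hF]
    have expand : ∀ A : ℝ, (w 0 * 1 + A) ^ 4 + (w 0 * (-1) + A) ^ 4
        = 2 * (w 0 ^ 4) + 12 * w 0 ^ 2 * A ^ 2 + 2 * A ^ 4 := by intro A; ring
    rw [← Finset.sum_add_distrib]
    simp only [expand]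
    rw [Finset.sum_add_distrib, Finset.sum_add_distrib]
    simp only [← Finset.mul_sum]
    rw [pm_moment2 n (fun i => w i.succ), Finset.sum_const, Finset.card_univ,
      Fin.sum_univ_succ (fun i => w i ^ 2)]
    simp only [Fintype.card_fun, Fintype.card_bool, Fintype.card_fin, nsmul_eq_mul]
    push_cast
    rw [show ((2:ℝ)^(n+1)) = 2^n * 2 from pow_succ 2 n]
    have h4 := ih (fun i => w i.succ)
    have hS : (0:ℝ) ≤ ∑ i : Fin n, w i.succ ^ 2 :=
      Finset.sum_nonneg fun i _ => sq_nonneg _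
    have h2n : (0:ℝ) < 2 ^ n := by positivity
    push_cast
    nlinarith [h4, mul_nonneg (le_of_lt h2n) (pow_nonneg (sq_nonneg (w 0)) 2), sq_nonneg (w 0)]

lemma pm_transfer {ι : Type*} [Fintype ι] [DecidableEq ι] (w : ι → ℝ) (F : ℝ → ℝ) :
    ∑ s : ι → Bool, F (∑ i, w i * signVal (s i)) =
      ∑ t : Fin (Fintype.card ι) → Bool,
        F (∑ j, w ((Fintype.equivFin ι).symm j) * signVal (t j)) := by
  rw [← Equiv.sum_comp (Equiv.arrowCongr (Fintype.equivFin ι).symm (Equiv.refl Bool))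
    (fun s : ι → Bool => F (∑ i, w i * signVal (s i)))]
  apply Finset.sum_congr rfl
  intro t _
  congr 1
  rw [← Equiv.sum_comp (Fintype.equivFin ι)
    (fun j => w ((Fintype.equivFin ι).symm j) * signVal (t j))]
  simp [Equiv.arrowCongr]

lemma pm_L2 {ι : Type*} [Fintype ι] [DecidableEq ι] (w : ι → ℝ) :
    ∑ s : ι → Bool, (∑ i, w i * signVal (s i)) ^ 2
      = 2 ^ (Fintype.card ι) * ∑ i, w i ^ 2 := by
  have h := pm_transfer w (fun x => x ^ 2)
  rw [h, pm_moment2]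
  congr 1
  exact Equiv.sum_comp (Fintype.equivFin ι).symm fun i => w i ^ 2

lemma pm_L4 {ι : Type*} [Fintype ι] [DecidableEq ι] (w : ι → ℝ) :
    ∑ s : ι → Bool, (∑ i, w i * signVal (s i)) ^ 4
      ≤ 3 * 2 ^ (Fintype.card ι) * (∑ i, w i ^ 2) ^ 2 := by
  have h := pm_transfer w (fun x => x ^ 4)
  rw [h]
  calc _ ≤ 3 * 2 ^ (Fintype.card ι) *
        (∑ j, w ((Fintype.equivFin ι).symm j) ^ 2) ^ 2 := pm_moment4 _ _
    _ = _ := by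
        congr 2
        exact Equiv.sum_comp (Fintype.equivFin ι).symm fun i => w i ^ 2


/-- **Lemma (±1 projection preserves length, Lemma 19).** If `U` is a uniformly
random `d×k` sign matrix and `𝟙 ∈ ℝ^k` has all coordinates `1/√k`, then for every
`v ∈ ℝ^d`, with probability at least `1/5` one has `(v·(U𝟙))² ≥ ‖v‖²/4`. Probability
is expressed by counting sign matrices (encoded as Boolean matrices). -/
theorem pm_one_projection (d k : ℕ) (hd : 1 ≤ d) (hk : 1 ≤ k) (v : Fin d → ℝ) :
    (Fintype.card (Fin d → Fin k → Bool) : ℝ) ≤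
      5 * (Nat.card {s : Fin d → Fin k → Bool |
        (∑ i, v i ^ 2) / 4 ≤
          (∑ i, v i * ((∑ j, signVal (s i j)) / Real.sqrt k)) ^ 2} : ℝ) := by
  classical
  set μ : ℝ := ∑ i, v i ^ 2 with hμdef
  set X : (Fin d → Fin k → Bool) → ℝ :=
    fun s => ∑ i, v i * ((∑ j, signVal (s i j)) / Real.sqrt k) with hXdef
  set P : (Fin d → Fin k → Bool) → Prop := fun s => μ / 4 ≤ X s ^ 2 with hPdef
  set A : Finset (Fin d → Fin k → Bool) := Finset.univ.filter P with hAdef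
  have hcardA : (Nat.card {s : Fin d → Fin k → Bool | P s}) = A.card := by
    simp only [hAdef, Set.coe_setOf, Nat.card_eq_fintype_card, Fintype.card_subtype]
  have hk0 : (0:ℝ) < (k:ℝ) := by exact_mod_cast hk
  have hsq : Real.sqrt k ^ 2 = (k:ℝ) := Real.sq_sqrt (le_of_lt hk0)
  set w : (Fin d × Fin k) → ℝ := fun p => v p.1 / Real.sqrt k with hwdef
  have hXw : ∀ s, X s = ∑ p : Fin d × Fin k, w p * signVal (s p.1 p.2) := by
    intro s
    rw [hXdef]
    simp only [Fintype.sum_prod_type, hwdef]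
    apply Finset.sum_congr rfl
    intro i _
    rw [← Finset.mul_sum]
    ring
  have hw2 : ∑ p : Fin d × Fin k, w p ^ 2 = μ := by
    simp only [Fintype.sum_prod_type, hwdef, div_pow, hsq]
    rw [hμdef]
    apply Finset.sum_congr rfl
    intro i _
    rw [Finset.sum_const, Finset.card_univ, Fintype.card_fin, nsmul_eq_mul]
    field_simp
  set N : ℝ := (Fintype.card (Fin d → Fin k → Bool) : ℝ) with hNdef
  have hNpos : (0:ℝ) < N := by
    rw [hNdef]; exact_mod_cast Fintype.card_pos
  have hN2 : N = 2 ^ (Fintype.card (Fin d × Fin k)) := by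
    rw [hNdef]
    simp only [Fintype.card_fun, Fintype.card_bool, Fintype.card_fin, Fintype.card_prod]
    push_cast
    rw [← pow_mul, mul_comm]
  have hcur : ∀ F : ℝ → ℝ, ∑ s : Fin d → Fin k → Bool, F (X s)
      = ∑ t : Fin d × Fin k → Bool, F (∑ p : Fin d × Fin k, w p * signVal (t p)) := by
    intro F
    rw [← Equiv.sum_comp (Equiv.curry (Fin d) (Fin k) Bool)
      (fun s : Fin d → Fin k → Bool => F (X s))]
    apply Finset.sum_congr rfl
    intro t _
    congr 1
    rw [hXw]
    apply Finset.sum_congr rfl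
    intro p _
    rfl
  have h2 : ∑ s : Fin d → Fin k → Bool, X s ^ 2 = N * μ := by
    have h := hcur (fun x => x ^ 2)
    rw [h, pm_L2, hw2, hN2]
  have h4 : ∑ s : Fin d → Fin k → Bool, X s ^ 4 ≤ 3 * N * μ ^ 2 := by
    have h := hcur (fun x => x ^ 4)
    rw [h, hN2]
    calc _ ≤ 3 * 2 ^ (Fintype.card (Fin d × Fin k)) *
          (∑ p : Fin d × Fin k, w p ^ 2) ^ 2 := pm_L4 w
      _ = _ := by rw [hw2]
  have hμnn : (0:ℝ) ≤ μ := Finset.sum_nonneg fun i _ => sq_nonneg _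
  rw [show {s : Fin d → Fin k → Bool |
        (∑ i, v i ^ 2) / 4 ≤
          (∑ i, v i * ((∑ j, signVal (s i j)) / Real.sqrt k)) ^ 2}
      = {s | P s} from rfl, hcardA]
  by_cases hμ : μ = 0
  · have hAall : A = Finset.univ := by
      rw [hAdef]
      apply Finset.filter_true_of_mem
      intro s _
      show μ / 4 ≤ X s ^ 2
      rw [hμ]
      simpa using sq_nonneg (X s)
    rw [hAall, Finset.card_univ]
    rw [hNdef] at hNpos
    linarith
  · have hμpos : (0:ℝ) < μ := lt_of_le_of_ne hμnn (Ne.symm hμ)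
    set f : (Fin d → Fin k → Bool) → ℝ := fun s => X s ^ 2 - μ / 4 with hfdef
    have hsumf : ∑ s : Fin d → Fin k → Bool, f s = (3/4) * N * μ := by
      simp only [hfdef]
      rw [Finset.sum_sub_distrib, h2, Finset.sum_const, Finset.card_univ, nsmul_eq_mul]
      rw [← hNdef]; ring
    have hsplit : ∑ s : Fin d → Fin k → Bool, f s ≤ ∑ s ∈ A, f s := by
      have hsp := Finset.sum_filter_add_sum_filter_not Finset.univ P f
      have hneg : ∑ s ∈ Finset.univ.filter (fun s => ¬ P s), f s ≤ 0 := by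
        apply Finset.sum_nonpos
        intro s hs
        rw [Finset.mem_filter] at hs
        have h1 := hs.2
        rw [hPdef] at h1
        simp only [not_le] at h1
        simp only [hfdef]
        linarith
      rw [hAdef]
      linarith
    have hfA : (0:ℝ) ≤ ∑ s ∈ A, f s := by
      have h0 : (0:ℝ) ≤ (3/4) * N * μ := by positivity
      have h1 := hsplit
      rw [hsumf] at h1
      linarith
    have hCS : (∑ s ∈ A, f s) ^ 2 ≤ A.card * ∑ s ∈ A, f s ^ 2 :=
      sq_sum_le_card_mul_sum_sq
    have hsub : ∑ s ∈ A, f s ^ 2 ≤ ∑ s : Fin d → Fin k → Bool, f s ^ 2 :=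
      Finset.sum_le_sum_of_subset_of_nonneg (Finset.filter_subset _ _)
        (fun s _ _ => sq_nonneg _)
    have hQ : ∑ s : Fin d → Fin k → Bool, f s ^ 2 ≤ (41/16) * N * μ ^ 2 := by
      have expand : ∀ s, f s ^ 2 = X s ^ 4 - (μ / 2) * X s ^ 2 + μ ^ 2 / 16 := by
        intro s; simp only [hfdef]; ring
      rw [Finset.sum_congr rfl fun s _ => expand s]
      rw [Finset.sum_add_distrib, Finset.sum_sub_distrib, ← Finset.mul_sum, h2,
        Finset.sum_const, Finset.card_univ, nsmul_eq_mul, ← hNdef]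
      nlinarith [h4]
    have hmain : ((3/4) * N * μ) ^ 2 ≤ (A.card : ℝ) * ((41/16) * N * μ ^ 2) := by
      calc ((3/4) * N * μ) ^ 2 = (∑ s : Fin d → Fin k → Bool, f s) ^ 2 := by rw [hsumf]
        _ ≤ (∑ s ∈ A, f s) ^ 2 := by
            apply pow_le_pow_left₀ (by rw [hsumf] at hsplit ⊢; positivity) hsplit
        _ ≤ A.card * ∑ s ∈ A, f s ^ 2 := hCS
        _ ≤ A.card * ((41/16) * N * μ ^ 2) := by
            apply mul_le_mul_of_nonneg_left _ (Nat.cast_nonneg _)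
            exact le_trans hsub hQ
    have hAnn : (0:ℝ) ≤ (A.card : ℝ) := Nat.cast_nonneg _
    rw [hNdef] at hmain hNpos ⊢
    nlinarith [mul_pos hNpos (mul_pos hNpos (pow_pos hμpos 2)), hmain, hAnn,
      mul_pos hNpos (pow_pos hμpos 2)]
end
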